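/- Fix α > 0. For r > 0 and x ∈ ℝ² define J_r(x) := ∫_{−r}^{r} [ ‖(r,s) − x‖_∞^{−2−α} + ‖(−r,s) − x‖_∞^{−2−α} + ‖(s,r) − x‖_∞^{−2−α} + ‖(s,−r) − x‖_∞^{−2−α} ] ds, the arc-length integral of z ↦ ‖z − x‖_∞^{−2−α} over the square { z ∈ ℝ² : ‖z‖_∞ = r }. Then for all r > 0 and all x ∈ ℝ² with ‖x‖_∞ < r, 2·(r − ‖x‖_∞)^{−1−α} ≤ J_r(x) ≤ 8·(1 + 1/(1+α))·(r − ‖x‖_∞)^{−1−α}. -/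

import Mathlib

/-!
The reflections `z ↦ -z` and `z ↦ z.swap` preserve the sup norm and permute the edges of the
square, so `J_r(x)` is the sum of the right-edge integrals `∫_{-r}^{r} ‖(r, s) - y‖^{-2-α} ds`
over `y = x, -x, x.swap, -x.swap`, all with `‖y‖ = ‖x‖`. Put `d = r - ‖x‖`.
On the right edge `‖(r, s) - y‖ ≥ max d |s - y₂|`, and
`∫_ℝ max(d, |u|)^{-2-α} du = 2 (1 + 1/(1+α)) d^{-1-α}` gives the upper bound.
For the lower bound, one of the four `y` has `y₁ = ‖x‖`; then `‖(r, s) - y‖ = d` whenever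
`|s - y₂| ≤ d`, an interval of length `2d` inside `[-r, r]`.
-/

/-- `J_r(x)`: arc-length integral of `z ↦ ‖z − x‖_∞^{−2−α}` over the square `‖z‖_∞ = r`,
written as a sum of four edge integrals.  The norm on `ℝ × ℝ` is the sup norm. -/
noncomputable def Jsq (α : ℝ) (r : ℝ) (x : ℝ × ℝ) : ℝ :=
  ∫ s in (-r)..r,
    (‖((r, s) : ℝ × ℝ) - x‖ ^ (-(2 + α)) + ‖((-r, s) : ℝ × ℝ) - x‖ ^ (-(2 + α)) +
     ‖((s, r) : ℝ × ℝ) - x‖ ^ (-(2 + α)) + ‖((s, -r) : ℝ × ℝ) - x‖ ^ (-(2 + α)))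

open MeasureTheory intervalIntegral Set

section OneDimensional

variable {α d : ℝ}

lemma rpow_neg_one_add_eq_mul (hd : 0 < d) : d ^ (-(1 + α)) = d ^ (-(2 + α)) * d := by
  rw [← Real.rpow_add_one hd.ne']
  ring_nf

lemma mul_le_intervalIntegral_of_le_on {f : ℝ → ℝ} {a b u v m : ℝ} (hau : a ≤ u) (huv : u ≤ v)
    (hvb : v ≤ b) (hf_nonneg : ∀ s, 0 ≤ f s) (hf_ge : ∀ s ∈ Icc u v, m ≤ f s)
    (hf : IntervalIntegrable f volume a b) :
    (v - u) * m ≤ ∫ s in a..b, f s := by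
  have hsub : uIcc u v ⊆ uIcc a b :=
    uIcc_subset_uIcc (mem_uIcc_of_le hau (huv.trans hvb)) (mem_uIcc_of_le (hau.trans huv) hvb)
  calc (v - u) * m = ∫ _ in u..v, m := by rw [intervalIntegral.integral_const, smul_eq_mul]
    _ ≤ ∫ s in u..v, f s := integral_mono_on huv intervalIntegrable_const (hf.mono_set hsub) hf_ge
    _ ≤ ∫ s in a..b, f s :=
      integral_mono_interval hau huv hvb (Filter.Eventually.of_forall hf_nonneg) hf

lemma continuous_max_abs_rpow (hd : 0 < d) (p : ℝ) : Continuous fun u : ℝ => max d |u| ^ p :=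
  (continuous_const.max continuous_abs).rpow_const
    fun _ => Or.inl (hd.trans_le (le_max_left _ _)).ne'

lemma integral_neg_self_self_max_abs_rpow (hd : 0 < d) :
    ∫ u in (-d)..d, max d |u| ^ (-(2 + α)) = 2 * d ^ (-(1 + α)) := by
  have hconst : EqOn (fun u : ℝ => max d |u| ^ (-(2 + α))) (fun _ => d ^ (-(2 + α)))
      (uIcc (-d) d) := by
    intro u hu
    rw [uIcc_of_le (by linarith)] at hu
    simp only [max_eq_left (abs_le.2 hu)]
  rw [integral_congr hconst, intervalIntegral.integral_const, smul_eq_mul,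
    rpow_neg_one_add_eq_mul hd]
  ring

lemma integral_rpow_le_of_lt_neg_one (hα : -1 < α) (hd : 0 < d) {L : ℝ} (hdL : d ≤ L) :
    ∫ u in d..L, u ^ (-(2 + α)) ≤ d ^ (-(1 + α)) / (1 + α) := by
  have h0 : (0 : ℝ) ∉ uIcc d L := by rw [uIcc_of_le hdL]; exact fun h => hd.not_ge h.1
  rw [integral_rpow (Or.inr ⟨by linarith, h0⟩), show -(2 + α) + 1 = -(1 + α) by ring,
    div_neg, ← neg_div, neg_sub]
  gcongr
  · linarith
  · exact sub_le_self _ (Real.rpow_nonneg (hd.le.trans hdL) _)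

lemma integral_max_abs_rpow_le (hα : -1 < α) (hd : 0 < d) {L : ℝ} (hdL : d ≤ L) :
    ∫ u in (-L)..L, max d |u| ^ (-(2 + α)) ≤ 2 * (1 + 1 / (1 + α)) * d ^ (-(1 + α)) := by
  set g : ℝ → ℝ := fun u => max d |u| ^ (-(2 + α))
  have hg : ∀ a b, IntervalIntegrable g volume a b :=
    fun _ _ => (continuous_max_abs_rpow hd _).intervalIntegrable _ _
  have hright : ∫ u in d..L, g u ≤ d ^ (-(1 + α)) / (1 + α) := by
    have htail : EqOn g (fun u => u ^ (-(2 + α))) (uIcc d L) := by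
      intro u hu
      rw [uIcc_of_le hdL] at hu
      simp only [g, abs_of_pos (hd.trans_le hu.1), max_eq_right hu.1]
    rw [integral_congr htail]
    exact integral_rpow_le_of_lt_neg_one hα hd hdL
  have hleft : ∫ u in (-L)..(-d), g u = ∫ u in d..L, g u := by
    simpa [g] using (integral_comp_neg (a := d) (b := L) g).symm
  rw [← integral_add_adjacent_intervals (hg _ _) (hg d L),
    ← integral_add_adjacent_intervals (hg _ _) (hg (-d) d), hleft,
    integral_neg_self_self_max_abs_rpow hd]
  have : 2 * (1 + 1 / (1 + α)) * d ^ (-(1 + α))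
      = d ^ (-(1 + α)) / (1 + α) + 2 * d ^ (-(1 + α)) + d ^ (-(1 + α)) / (1 + α) := by
    ring
  linarith

lemma integral_max_abs_sub_rpow_le (hα : -1 < α) (hd : 0 < d) {a b : ℝ} (hab : a ≤ b) (c : ℝ) :
    ∫ s in a..b, max d |s - c| ^ (-(2 + α)) ≤ 2 * (1 + 1 / (1 + α)) * d ^ (-(1 + α)) := by
  set L := |a - c| + |b - c| + d
  calc ∫ s in a..b, max d |s - c| ^ (-(2 + α))
      = ∫ u in (a - c)..(b - c), max d |u| ^ (-(2 + α)) :=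
        integral_comp_sub_right (fun u => max d |u| ^ (-(2 + α))) c
    _ ≤ ∫ u in (-L)..L, max d |u| ^ (-(2 + α)) :=
        integral_mono_interval (by linarith [neg_abs_le (a - c), abs_nonneg (b - c)])
          (by linarith) (by linarith [le_abs_self (b - c), abs_nonneg (a - c)])
          (Filter.Eventually.of_forall fun _ => Real.rpow_nonneg (hd.le.trans (le_max_left _ _)) _)
          ((continuous_max_abs_rpow hd _).intervalIntegrable _ _)
    _ ≤ _ := integral_max_abs_rpow_le hα hd (by linarith [abs_nonneg (a - c), abs_nonneg (b - c)])

end OneDimensional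

lemma norm_mk_sub (a b : ℝ) (y : ℝ × ℝ) : ‖((a, b) : ℝ × ℝ) - y‖ = max |a - y.1| |b - y.2| := rfl

lemma Prod.norm_swap {E : Type*} [SeminormedAddGroup E] (x : E × E) : ‖x.swap‖ = ‖x‖ :=
  max_comm _ _

lemma sub_norm_le_abs_sub_fst (r : ℝ) (y : ℝ × ℝ) : r - ‖y‖ ≤ |r - y.1| := by
  have : y.1 ≤ ‖y‖ := (le_abs_self _).trans (norm_fst_le y)
  linarith [le_abs_self (r - y.1)]

noncomputable def edgeIntegral (α r : ℝ) (y : ℝ × ℝ) : ℝ :=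
  ∫ s in (-r)..r, ‖((r, s) : ℝ × ℝ) - y‖ ^ (-(2 + α))

section Edge

variable {α r : ℝ}

lemma continuous_rpow_norm_edge_sub {y : ℝ × ℝ} (hy : ‖y‖ < r) (p : ℝ) :
    Continuous fun s : ℝ => ‖((r, s) : ℝ × ℝ) - y‖ ^ p := by
  refine (((continuous_const.prodMk continuous_id).sub continuous_const).norm).rpow_const
    fun s => Or.inl (ne_of_gt ?_)
  rw [norm_mk_sub]
  exact (sub_pos.2 hy).trans_le ((sub_norm_le_abs_sub_fst r y).trans (le_max_left _ _))

lemma edgeIntegral_nonneg (hr : 0 ≤ r) (y : ℝ × ℝ) : 0 ≤ edgeIntegral α r y :=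
  integral_nonneg (by linarith) fun _ _ => Real.rpow_nonneg (norm_nonneg _) _

lemma edgeIntegral_le (hα : -1 < α) {y : ℝ × ℝ} (hy : ‖y‖ < r) :
    edgeIntegral α r y ≤ 2 * (1 + 1 / (1 + α)) * (r - ‖y‖) ^ (-(1 + α)) := by
  have hd : 0 < r - ‖y‖ := sub_pos.2 hy
  have hr : -r ≤ r := by linarith [norm_nonneg y]
  refine (integral_mono_on hr ((continuous_rpow_norm_edge_sub hy _).intervalIntegrable _ _)
    (((continuous_max_abs_rpow hd _).comp (continuous_sub_right y.2)).intervalIntegrable _ _)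
    fun s _ => ?_).trans (integral_max_abs_sub_rpow_le hα hd hr y.2)
  rw [norm_mk_sub]
  exact Real.rpow_le_rpow_of_nonpos (hd.trans_le (le_max_left _ _))
    (max_le_max (sub_norm_le_abs_sub_fst r y) le_rfl) (by linarith)

lemma le_edgeIntegral {y : ℝ × ℝ} (hy : ‖y‖ < r) (hy₁ : y.1 = ‖y‖) :
    2 * (r - ‖y‖) ^ (-(1 + α)) ≤ edgeIntegral α r y := by
  set d := r - ‖y‖
  have hd : 0 < d := sub_pos.2 hy
  have hy₂ : |y.2| ≤ ‖y‖ := norm_snd_le y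
  have hnorm : ∀ s ∈ Icc (y.2 - d) (y.2 + d), ‖((r, s) : ℝ × ℝ) - y‖ = d := fun s hs => by
    rw [norm_mk_sub, hy₁, abs_of_pos hd]
    exact max_eq_left (abs_sub_le_iff.2 ⟨by linarith [hs.2], by linarith [hs.1]⟩)
  calc 2 * d ^ (-(1 + α)) = ((y.2 + d) - (y.2 - d)) * d ^ (-(2 + α)) := by
        rw [rpow_neg_one_add_eq_mul hd]; ring
    _ ≤ edgeIntegral α r y :=
      mul_le_intervalIntegral_of_le_on (by linarith [neg_abs_le y.2]) (by linarith)
        (by linarith [le_abs_self y.2]) (fun _ => Real.rpow_nonneg (norm_nonneg _) _)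
        (fun s hs => (hnorm s hs).symm ▸ le_rfl)
        ((continuous_rpow_norm_edge_sub hy _).intervalIntegrable _ _)

end Edge

lemma Jsq_eq_sum_edgeIntegral {α r : ℝ} {x : ℝ × ℝ} (hx : ‖x‖ < r) :
    Jsq α r x = edgeIntegral α r x + edgeIntegral α r (-x) + edgeIntegral α r x.swap +
      edgeIntegral α r (-x.swap) := by
  set g : ℝ × ℝ → ℝ → ℝ := fun y s => ‖((r, s) : ℝ × ℝ) - y‖ ^ (-(2 + α))
  have hg : ∀ y : ℝ × ℝ, ‖y‖ = ‖x‖ → IntervalIntegrable (g y) volume (-r) r :=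
    fun y hy => (continuous_rpow_norm_edge_sub (hy ▸ hx) _).intervalIntegrable _ _
  have hg_neg : ∀ y : ℝ × ℝ, ‖y‖ = ‖x‖ → IntervalIntegrable (fun s => g y (-s)) volume (-r) r :=
    fun y hy =>
      ((continuous_rpow_norm_edge_sub (hy ▸ hx) _).comp continuous_neg).intervalIntegrable _ _
  have i₁ := hg x rfl
  have i₂ := hg_neg (-x) (norm_neg x)
  have i₃ := hg x.swap (Prod.norm_swap x)
  have i₄ := hg_neg (-x.swap) ((norm_neg _).trans (Prod.norm_swap x))
  have hedges : ∀ s : ℝ,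
      ‖((r, s) : ℝ × ℝ) - x‖ ^ (-(2 + α)) + ‖((-r, s) : ℝ × ℝ) - x‖ ^ (-(2 + α)) +
        ‖((s, r) : ℝ × ℝ) - x‖ ^ (-(2 + α)) + ‖((s, -r) : ℝ × ℝ) - x‖ ^ (-(2 + α))
      = g x s + g (-x) (-s) + g x.swap s + g (-x.swap) (-s) := by
    intro s
    have hleft : ∀ (y : ℝ × ℝ) (t : ℝ), ‖((-r, t) : ℝ × ℝ) - y‖ = ‖((r, -t) : ℝ × ℝ) - -y‖ := by
      intro y t; rw [← norm_neg]; congr 1; ext <;> simp <;> ring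
    have htop : ‖((s, r) : ℝ × ℝ) - x‖ = ‖((r, s) : ℝ × ℝ) - x.swap‖ := max_comm _ _
    have hbottom : ‖((s, -r) : ℝ × ℝ) - x‖ = ‖((r, -s) : ℝ × ℝ) - -x.swap‖ :=
      (max_comm _ _).trans (hleft x.swap s)
    simp only [g, hleft, htop, hbottom]
  have hreflect : ∀ y, ∫ s in (-r)..r, g y (-s) = edgeIntegral α r y := fun y => by
    rw [integral_comp_neg (g y), neg_neg]; rfl
  rw [Jsq, integral_congr fun s _ => hedges s, integral_add ((i₁.add i₂).add i₃) i₄,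
    integral_add (i₁.add i₂) i₃, integral_add i₁ i₂, hreflect, hreflect]
  rfl

lemma fst_eq_norm_of_reflections (x : ℝ × ℝ) :
    x.1 = ‖x‖ ∨ (-x).1 = ‖x‖ ∨ x.swap.1 = ‖x‖ ∨ (-x.swap).1 = ‖x‖ := by
  rw [Prod.norm_def, Real.norm_eq_abs, Real.norm_eq_abs, Prod.fst_neg, Prod.fst_neg,
    Prod.fst_swap]
  rcases le_total |x.2| |x.1| with h | h
  · rw [max_eq_left h]
    rcases abs_choice x.1 with h₁ | h₁ <;> rw [h₁] <;> simp
  · rw [max_eq_right h]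
    rcases abs_choice x.2 with h₂ | h₂ <;> rw [h₂] <;> simp

section Bounds

variable {α r : ℝ} {x : ℝ × ℝ}

lemma le_Jsq (hx : ‖x‖ < r) : 2 * (r - ‖x‖) ^ (-(1 + α)) ≤ Jsq α r x := by
  have hE : ∀ y : ℝ × ℝ, ‖y‖ = ‖x‖ → y.1 = ‖x‖ →
      2 * (r - ‖x‖) ^ (-(1 + α)) ≤ edgeIntegral α r y := fun y hy hy₁ => by
    rw [← hy] at hx hy₁ ⊢
    exact le_edgeIntegral hx hy₁
  have h0 : ∀ y, 0 ≤ edgeIntegral α r y := edgeIntegral_nonneg (by linarith [norm_nonneg x])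
  rw [Jsq_eq_sum_edgeIntegral hx]
  rcases fst_eq_norm_of_reflections x with h | h | h | h
  · linarith [hE x rfl h, h0 (-x), h0 x.swap, h0 (-x.swap)]
  · linarith [hE (-x) (norm_neg x) h, h0 x, h0 x.swap, h0 (-x.swap)]
  · linarith [hE x.swap (Prod.norm_swap x) h, h0 x, h0 (-x), h0 (-x.swap)]
  · linarith [hE (-x.swap) ((norm_neg _).trans (Prod.norm_swap x)) h, h0 x, h0 (-x), h0 x.swap]

lemma Jsq_le (hα : -1 < α) (hx : ‖x‖ < r) :
    Jsq α r x ≤ 8 * (1 + 1 / (1 + α)) * (r - ‖x‖) ^ (-(1 + α)) := by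
  have hE : ∀ y : ℝ × ℝ, ‖y‖ = ‖x‖ →
      edgeIntegral α r y ≤ 2 * (1 + 1 / (1 + α)) * (r - ‖x‖) ^ (-(1 + α)) := fun y hy => by
    rw [← hy] at hx ⊢
    exact edgeIntegral_le hα hx
  rw [Jsq_eq_sum_edgeIntegral hx]
  linarith [hE x rfl, hE (-x) (norm_neg x), hE x.swap (Prod.norm_swap x),
    hE (-x.swap) ((norm_neg _).trans (Prod.norm_swap x))]

end Bounds

/-- two-sided bounds on `J_r(x)` for `‖x‖_∞ < r`. -/
theorem Jsq_bounds_inside (α : ℝ) (hα : 0 < α) :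
    ∀ r : ℝ, 0 < r → ∀ x : ℝ × ℝ, ‖x‖ < r →
      2 * (r - ‖x‖) ^ (-(1 + α)) ≤ Jsq α r x ∧
      Jsq α r x ≤ 8 * (1 + 1 / (1 + α)) * (r - ‖x‖) ^ (-(1 + α)) := by
  intro r _ x hx
  exact ⟨le_Jsq hx, Jsq_le (by linarith) hx⟩
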